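/- arXiv:0909.4991 — 4 statements merged into one kernel-verified Lean document; each statement's English description precedes it below -/
import Mathlib

section
/- For positive reals $m_1, m_2, m_3$, real numbers $\xi, \eta$ not both zero, the quadratic form $(m_1^2+m_3^2+m_3 m_1)\xi^2 + (m_2^2+m_3^2+m_2 m_3)\eta^2 + (2m_3^2 - m_1 m_2 + m_2 m_3 + m_3 m_1)\xi\eta$ is strictly positive. -/
theorem stmt_1 (m₁ m₂ m₃ ξ η : ℝ)
    (hm₁ : 0 < m₁) (hm₂ : 0 < m₂) (hm₃ : 0 < m₃)
    (h : ¬ (ξ = 0 ∧ η = 0)) :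
    0 < (m₁^2 + m₃^2 + m₃*m₁) * ξ^2 + (m₂^2 + m₃^2 + m₂*m₃) * η^2
        + (2*m₃^2 - m₁*m₂ + m₂*m₃ + m₃*m₁) * ξ * η := by
  set Q := (m₁^2 + m₃^2 + m₃*m₁) * ξ^2 + (m₂^2 + m₃^2 + m₂*m₃) * η^2
        + (2*m₃^2 - m₁*m₂ + m₂*m₃ + m₃*m₁) * ξ * η with hQ
  rcases not_and_or.1 h with hx | hy
  · have hC : 0 < 4*(m₂^2 + m₃^2 + m₂*m₃) := by positivity
    have key : 4*(m₂^2 + m₃^2 + m₂*m₃) * Q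
        = (2*(m₂^2 + m₃^2 + m₂*m₃)*η + (2*m₃^2 - m₁*m₂ + m₂*m₃ + m₃*m₁)*ξ)^2
          + 3*((m₁*m₂+m₂*m₃+m₃*m₁)*ξ)^2 := by rw [hQ]; ring
    have hpos : 0 < 4*(m₂^2 + m₃^2 + m₂*m₃) * Q := by
      rw [key]
      have : 0 < 3*((m₁*m₂+m₂*m₃+m₃*m₁)*ξ)^2 := by positivity
      nlinarith [sq_nonneg (2*(m₂^2 + m₃^2 + m₂*m₃)*η + (2*m₃^2 - m₁*m₂ + m₂*m₃ + m₃*m₁)*ξ)]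
    exact (mul_pos_iff_of_pos_left hC).mp hpos
  · have hA : 0 < 4*(m₁^2 + m₃^2 + m₃*m₁) := by positivity
    have key : 4*(m₁^2 + m₃^2 + m₃*m₁) * Q
        = (2*(m₁^2 + m₃^2 + m₃*m₁)*ξ + (2*m₃^2 - m₁*m₂ + m₂*m₃ + m₃*m₁)*η)^2
          + 3*((m₁*m₂+m₂*m₃+m₃*m₁)*η)^2 := by rw [hQ]; ring
    have hpos : 0 < 4*(m₁^2 + m₃^2 + m₃*m₁) * Q := by
      rw [key]
      have : 0 < 3*((m₁*m₂+m₂*m₃+m₃*m₁)*η)^2 := by positivity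
      nlinarith [sq_nonneg (2*(m₁^2 + m₃^2 + m₃*m₁)*ξ + (2*m₃^2 - m₁*m₂ + m₂*m₃ + m₃*m₁)*η)]
    exact (mul_pos_iff_of_pos_left hA).mp hpos
end

section
/- With notation as in the definition of $E_\ell$ and $G_\ell$ for three bodies (center of mass at origin, $E_\ell = E_{jk} = m_j m_k (r_{jk}^{-(a+2)} - a\mu/M)$ where $(j,k,\ell)$ ranges over cyclic permutations of $(1,2,3)$, $G_\ell = g_\ell + a\mu m_\ell Q_\ell$): if additionally $\sum_\ell r_{jk}^2 E_\ell = 0$ (summing over cyclic permutations), then for each $\ell$, $|G_\ell|^2 = -(E_1 E_2 + E_2 E_3 + E_3 E_1)\, r_{jk}^2$, where $(j,k)$ is the pair complementary to $\ell$. -/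
section

variable {V : Type*} [NormedAddCommGroup V] [InnerProductSpace ℝ V]

theorem norm_smul_add_smul_sq (u w : V) (s t : ℝ) :
    ‖s • u + t • w‖ ^ 2 =
      s ^ 2 * ‖u‖ ^ 2 + t ^ 2 * ‖w‖ ^ 2 + s * t * (‖u‖ ^ 2 + ‖w‖ ^ 2 - ‖u - w‖ ^ 2) := by
  rw [norm_add_sq_real, norm_sub_sq_real, norm_smul, norm_smul, real_inner_smul_left,
    real_inner_smul_right, mul_pow, mul_pow, Real.norm_eq_abs, Real.norm_eq_abs, sq_abs, sq_abs]
  ring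

theorem norm_sq_weighted_sides_of_sum_eq_zero {x y z : V} {e₁ e₂ e₃ : ℝ}
    (h : ‖y - z‖ ^ 2 * e₁ + ‖z - x‖ ^ 2 * e₂ + ‖x - y‖ ^ 2 * e₃ = 0) :
    ‖e₃ • (y - x) + e₂ • (z - x)‖ ^ 2 = -(e₁ * e₂ + e₂ * e₃ + e₃ * e₁) * ‖y - z‖ ^ 2 := by
  have hyz : y - x - (z - x) = y - z := by abel
  rw [norm_smul_add_smul_sq, hyz]
  rw [norm_sub_rev x y] at h
  linear_combination (e₂ + e₃) * h

end

theorem stmt_13_general (Q₁ Q₂ Q₃ : ℂ)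
    (E₁ E₂ E₃ : ℝ)
    (G₁ G₂ G₃ : ℂ)
    (hG₁ : G₁ = E₃ • (Q₂ - Q₁) + E₂ • (Q₃ - Q₁))
    (hG₂ : G₂ = E₁ • (Q₃ - Q₂) + E₃ • (Q₁ - Q₂))
    (hG₃ : G₃ = E₂ • (Q₁ - Q₃) + E₁ • (Q₂ - Q₃))
    (hsum : ‖Q₂ - Q₃‖^2 * E₁ + ‖Q₃ - Q₁‖^2 * E₂ + ‖Q₁ - Q₂‖^2 * E₃ = 0) :
    ‖G₁‖^2 = -(E₁*E₂ + E₂*E₃ + E₃*E₁) * ‖Q₂ - Q₃‖^2 ∧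
    ‖G₂‖^2 = -(E₁*E₂ + E₂*E₃ + E₃*E₁) * ‖Q₃ - Q₁‖^2 ∧
    ‖G₃‖^2 = -(E₁*E₂ + E₂*E₃ + E₃*E₁) * ‖Q₁ - Q₂‖^2 := by
  subst hG₁ hG₂ hG₃
  refine ⟨norm_sq_weighted_sides_of_sum_eq_zero hsum, ?_, ?_⟩
  · rw [norm_sq_weighted_sides_of_sum_eq_zero (e₁ := E₂) (by linear_combination hsum)]
    ring
  · rw [norm_sq_weighted_sides_of_sum_eq_zero (e₁ := E₃) (by linear_combination hsum)]
    ring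

theorem stmt_13 (Q₁ Q₂ Q₃ : ℂ) (m₁ m₂ m₃ a μ : ℝ)
    (hm₁ : 0 < m₁) (hm₂ : 0 < m₂) (hm₃ : 0 < m₃) (ha : 0 < a)
    (hr₁₂ : Q₁ ≠ Q₂) (hr₂₃ : Q₂ ≠ Q₃) (hr₃₁ : Q₃ ≠ Q₁)
    (hcm : m₁ • Q₁ + m₂ • Q₂ + m₃ • Q₃ = 0)
    (M : ℝ) (hM : M = m₁ + m₂ + m₃)
    (E₁ E₂ E₃ : ℝ)
    (hE₁ : E₁ = m₂ * m₃ * (‖Q₂ - Q₃‖ ^ (-(a+2) : ℝ) - a * μ / M))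
    (hE₂ : E₂ = m₃ * m₁ * (‖Q₃ - Q₁‖ ^ (-(a+2) : ℝ) - a * μ / M))
    (hE₃ : E₃ = m₁ * m₂ * (‖Q₁ - Q₂‖ ^ (-(a+2) : ℝ) - a * μ / M))
    (G₁ G₂ G₃ : ℂ)
    (hG₁ : G₁ = E₃ • (Q₂ - Q₁) + E₂ • (Q₃ - Q₁))
    (hG₂ : G₂ = E₁ • (Q₃ - Q₂) + E₃ • (Q₁ - Q₂))
    (hG₃ : G₃ = E₂ • (Q₁ - Q₃) + E₁ • (Q₂ - Q₃))
    (hsum : ‖Q₂ - Q₃‖^2 * E₁ + ‖Q₃ - Q₁‖^2 * E₂ + ‖Q₁ - Q₂‖^2 * E₃ = 0) :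
    ‖G₁‖^2 = -(E₁*E₂ + E₂*E₃ + E₃*E₁) * ‖Q₂ - Q₃‖^2 ∧
    ‖G₂‖^2 = -(E₁*E₂ + E₂*E₃ + E₃*E₁) * ‖Q₃ - Q₁‖^2 ∧
    ‖G₃‖^2 = -(E₁*E₂ + E₂*E₃ + E₃*E₁) * ‖Q₁ - Q₂‖^2 :=
  stmt_13_general Q₁ Q₂ Q₃ E₁ E₂ E₃ G₁ G₂ G₃ hG₁ hG₂ hG₃ hsum
end

section
/- Let $Q_1, Q_2, Q_3 \in \mathbb{C}$, masses $m_k > 0$, $M = \sum m_k$, $\sum m_k Q_k = 0$, distinct positions, $a > 0$, $\mu \in \mathbb{R}$, and $G_\ell = g_\ell + a\mu m_\ell Q_\ell$ with $g_\ell = \sum_{j\ne\ell} m_j m_\ell (Q_j - Q_\ell) r_{j\ell}^{-(a+2)}$. Then the torque identity $Q_\ell \wedge G_\ell = \frac{m_1 m_2 m_3 \Delta}{M}\left(r_{\ell j}^{-(a+2)} - r_{k\ell}^{-(a+2)}\right)$ holds for each cyclic permutation $(j,k,\ell)$ of $(1,2,3)$, where $\Delta = Q_1 \wedge Q_2 +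 Q_2 \wedge Q_3 + Q_3 \wedge Q_1$. -/
noncomputable def wedge14 (z w : ℂ) : ℝ := z.re * w.im - z.im * w.re

theorem stmt_14 (Q₁ Q₂ Q₃ : ℂ) (m₁ m₂ m₃ a μ : ℝ)
    (hm₁ : 0 < m₁) (hm₂ : 0 < m₂) (hm₃ : 0 < m₃) (ha : 0 < a)
    (hr₁₂ : Q₁ ≠ Q₂) (hr₂₃ : Q₂ ≠ Q₃) (hr₃₁ : Q₃ ≠ Q₁)
    (hcm : m₁ • Q₁ + m₂ • Q₂ + m₃ • Q₃ = 0)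
    (M : ℝ) (hM : M = m₁ + m₂ + m₃)
    (Δ : ℝ) (hΔ : Δ = wedge14 Q₁ Q₂ + wedge14 Q₂ Q₃ + wedge14 Q₃ Q₁)
    (G₁ G₂ G₃ : ℂ)
    (hG₁ : G₁ = (m₂ * m₁ * ‖Q₂ - Q₁‖ ^ (-(a+2) : ℝ)) • (Q₂ - Q₁)
        + (m₃ * m₁ * ‖Q₃ - Q₁‖ ^ (-(a+2) : ℝ)) • (Q₃ - Q₁) + (a * μ * m₁) • Q₁)
    (hG₂ : G₂ = (m₁ * m₂ * ‖Q₁ - Q₂‖ ^ (-(a+2) : ℝ)) • (Q₁ - Q₂)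
        + (m₃ * m₂ * ‖Q₃ - Q₂‖ ^ (-(a+2) : ℝ)) • (Q₃ - Q₂) + (a * μ * m₂) • Q₂)
    (hG₃ : G₃ = (m₁ * m₃ * ‖Q₁ - Q₃‖ ^ (-(a+2) : ℝ)) • (Q₁ - Q₃)
        + (m₂ * m₃ * ‖Q₂ - Q₃‖ ^ (-(a+2) : ℝ)) • (Q₂ - Q₃) + (a * μ * m₃) • Q₃) :
    wedge14 Q₃ G₃ = (m₁ * m₂ * m₃ * Δ / M)
        * (‖Q₃ - Q₁‖ ^ (-(a+2) : ℝ) - ‖Q₂ - Q₃‖ ^ (-(a+2) : ℝ)) ∧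
    wedge14 Q₁ G₁ = (m₁ * m₂ * m₃ * Δ / M)
        * (‖Q₁ - Q₂‖ ^ (-(a+2) : ℝ) - ‖Q₃ - Q₁‖ ^ (-(a+2) : ℝ)) ∧
    wedge14 Q₂ G₂ = (m₁ * m₂ * m₃ * Δ / M)
        * (‖Q₂ - Q₃‖ ^ (-(a+2) : ℝ) - ‖Q₁ - Q₂‖ ^ (-(a+2) : ℝ)) := by
  subst hG₁ hG₂ hG₃
  have h1 := congrArg Complex.re hcm
  have h2 := congrArg Complex.im hcm
  simp [Complex.add_re, Complex.add_im] at h1 h2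
  have hM0 : M ≠ 0 := by rw [hM]; positivity
  rw [norm_sub_rev Q₂ Q₁, norm_sub_rev Q₃ Q₂, norm_sub_rev Q₁ Q₃]
  set r12 : ℝ := ‖Q₁ - Q₂‖ ^ (-(a+2) : ℝ) with hr12
  set r23 : ℝ := ‖Q₂ - Q₃‖ ^ (-(a+2) : ℝ) with hr23
  set r31 : ℝ := ‖Q₃ - Q₁‖ ^ (-(a+2) : ℝ) with hr31
  have hA : M * wedge14 Q₁ Q₂ = m₃ * Δ := by
    rw [hM, hΔ]; simp only [wedge14]
    linear_combination Q₂.im * h1 - Q₂.re * h2 + Q₁.re * h2 - Q₁.im * h1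
  have hB : M * wedge14 Q₂ Q₃ = m₁ * Δ := by
    rw [hM, hΔ]; simp only [wedge14]
    linear_combination Q₃.im * h2 - Q₃.im * h2 + Q₃.im * h1 - Q₃.re * h2 + Q₂.re * h2 - Q₂.im * h1
  have hC : M * wedge14 Q₃ Q₁ = m₂ * Δ := by
    rw [hM, hΔ]; simp only [wedge14]
    linear_combination Q₁.im * h1 - Q₁.re * h2 + Q₃.re * h2 - Q₃.im * h1
  simp only [wedge14, Complex.add_re, Complex.add_im, Complex.sub_re, Complex.sub_im,
    Complex.smul_re, Complex.smul_im] at hA hB hC ⊢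
  refine ⟨?_, ?_, ?_⟩
  · field_simp
    linear_combination (m₁ * m₃ * r31) * hC - (m₂ * m₃ * r23) * hB
  · field_simp
    linear_combination (m₂ * m₁ * r12) * hA - (m₃ * m₁ * r31) * hC
  · field_simp
    linear_combination (m₃ * m₂ * r23) * hB - (m₁ * m₂ * r12) * hA
end

section
/- Let $q : \mathbb{R} \to \mathbb{C}^n$ be a smooth planar $n$-body path with $I(t) = \sum m_k|q_k(t)|^2 > 0$ and constant angular momentum $C$, and let $Q_k$ be the Fujiwara coordinates $Q_k(t) = \exp(-iC\int_0^t I^{-1}ds)\, q_k(t)/\sqrt{I(t)}$. Then the path is homographic (i.e., there exist smooth real functions $R(t) > 0$ and $\theta(t)$ with $q_k(t) = R(t)e^{i\theta(t)}q_k(0)$ for all $k, t$) if and only if $\dot Q_k(t) = 0$ for all $k$ and $t$. -/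
open Complex intervalIntegral Topology Filter Real

theorem stmt_18 (n : ℕ) (m : Fin n → ℝ) (hm : ∀ k, 0 < m k)
    (q : Fin n → ℝ → ℂ) (hq : ∀ k, ContDiff ℝ (⊤ : ℕ∞) (q k))
    (hcm : ∀ t : ℝ, ∑ k, (m k : ℂ) * q k t = 0)
    (I : ℝ → ℝ) (hI : ∀ t, I t = ∑ k, m k * ‖q k t‖^2)
    (hIpos : ∀ t, 0 < I t)
    (C : ℝ)
    (hC : ∀ t, (∑ k, (m k : ℂ) * ((starRingEnd ℂ) (q k t) * deriv (q k) t)).im = C)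
    (Q : Fin n → ℝ → ℂ)
    (hQ : ∀ k t, Q k t
      = Complex.exp (-(C : ℂ) * Complex.I * ((∫ s in (0:ℝ)..t, (I s)⁻¹ : ℝ) : ℂ))
        * q k t / (Real.sqrt (I t) : ℂ)) :
    (∃ R θ : ℝ → ℝ, ContDiff ℝ (⊤ : ℕ∞) R ∧ ContDiff ℝ (⊤ : ℕ∞) θ ∧ (∀ t, 0 < R t) ∧
        ∀ k t, q k t = (R t : ℂ) * Complex.exp ((θ t : ℂ) * Complex.I) * q k 0)
      ↔ (∀ k t, deriv (Q k) t = 0) := by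
  set F : ℝ → ℝ := fun t => ∫ s in (0:ℝ)..t, (I s)⁻¹ with hFdef
  have hIcd : ContDiff ℝ (⊤ : ℕ∞) I := by
    have h1 : I = fun t => ∑ k, m k * ‖q k t‖^2 := funext fun t => hI t
    rw [h1]
    exact ContDiff.sum fun k _ => contDiff_const.mul ((contDiff_norm_sq ℝ).comp (hq k))
  have hIne : ∀ t, I t ≠ 0 := fun t => (hIpos t).ne'
  have hFd : ∀ t, HasDerivAt F (I t)⁻¹ t := fun t =>
    ((hIcd.continuous.inv₀ hIne).integral_hasStrictDerivAt 0 t).hasDerivAt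
  have hF0 : F 0 = 0 := intervalIntegral.integral_same
  have hsq : ∀ t, (0:ℝ) < Real.sqrt (I t) := fun t => Real.sqrt_pos.mpr (hIpos t)
  have hsqne : ∀ t, (Real.sqrt (I t) : ℂ) ≠ 0 := fun t => by
    exact_mod_cast (hsq t).ne'
  have hQf : ∀ k, Q k = fun t =>
      Complex.exp (-(C : ℂ) * Complex.I * (F t : ℂ)) * q k t / (Real.sqrt (I t) : ℂ) :=
    fun k => funext fun t => hQ k t
  constructor
  · rintro ⟨R, θ, hRcd, hθcd, hRpos, heq⟩
    -- I t = R t ^ 2 * I 0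
    have hIt : ∀ t, I t = R t ^ 2 * I 0 := by
      intro t
      rw [hI t, hI 0, Finset.mul_sum]
      refine Finset.sum_congr rfl fun k _ => ?_
      rw [heq k t]
      simp [norm_mul, Complex.norm_exp_ofReal_mul_I, mul_pow]
      ring
    -- derivative of q k
    have hqd : ∀ k t, deriv (q k) t
        = (((deriv R t : ℝ) : ℂ) + (R t : ℂ) * (((deriv θ t : ℝ) : ℂ) * Complex.I))
            * Complex.exp ((θ t : ℂ) * Complex.I) * q k 0 := by
      intro k t
      have hR : HasDerivAt (fun t => ((R t : ℝ) : ℂ)) ((deriv R t : ℝ) : ℂ) t :=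
        ((hRcd.differentiable (by simp) t).hasDerivAt).ofReal_comp
      have hθi : HasDerivAt (fun t => ((θ t : ℝ) : ℂ) * Complex.I)
          (((deriv θ t : ℝ) : ℂ) * Complex.I) t :=
        (((hθcd.differentiable (by simp) t).hasDerivAt).ofReal_comp).mul_const Complex.I
      have hexp : HasDerivAt (fun t => Complex.exp (((θ t : ℝ) : ℂ) * Complex.I))
          (Complex.exp (((θ t : ℝ) : ℂ) * Complex.I) * (((deriv θ t : ℝ) : ℂ) * Complex.I)) t :=
        hθi.cexp
      have hprod : HasDerivAt (fun t => ((R t : ℝ) : ℂ)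
            * Complex.exp (((θ t : ℝ) : ℂ) * Complex.I) * q k 0)
          ((((deriv R t : ℝ) : ℂ) * Complex.exp (((θ t : ℝ) : ℂ) * Complex.I)
            + (R t : ℂ) * (Complex.exp (((θ t : ℝ) : ℂ) * Complex.I)
              * (((deriv θ t : ℝ) : ℂ) * Complex.I))) * q k 0) t :=
        (hR.mul hexp).mul_const (q k 0)
      have hqk : HasDerivAt (q k)
          ((((deriv R t : ℝ) : ℂ) * Complex.exp (((θ t : ℝ) : ℂ) * Complex.I)
            + (R t : ℂ) * (Complex.exp (((θ t : ℝ) : ℂ) * Complex.I)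
              * (((deriv θ t : ℝ) : ℂ) * Complex.I))) * q k 0) t :=
        hprod.congr_of_eventuallyEq (Filter.Eventually.of_forall fun s => heq k s)
      rw [hqk.deriv]
      ring
    -- θ' t = C / I t
    have hθ' : ∀ t, deriv θ t = C * (I t)⁻¹ := by
      intro t
      have hsum : (∑ k, (m k : ℂ) * ((starRingEnd ℂ) (q k t) * deriv (q k) t))
          = ((R t * deriv R t * I 0 : ℝ) : ℂ)
            + ((R t ^ 2 * deriv θ t * I 0 : ℝ) : ℂ) * Complex.I := by
        have : ∀ k : Fin n, (m k : ℂ) * ((starRingEnd ℂ) (q k t) * deriv (q k) t)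
            = ((m k * ‖q k 0‖^2 : ℝ) : ℂ)
              * (((R t * deriv R t : ℝ) : ℂ) + ((R t ^ 2 * deriv θ t : ℝ) : ℂ) * Complex.I) := by
          intro k
          rw [hqd k t, heq k t]
          have hc : (starRingEnd ℂ) (Complex.exp ((θ t : ℂ) * Complex.I))
              = Complex.exp (-((θ t : ℂ) * Complex.I)) := by
            rw [← Complex.exp_conj]
            congr 1
            simp [Complex.conj_ofReal]
          have he : Complex.exp (-((θ t : ℂ) * Complex.I))
              * Complex.exp ((θ t : ℂ) * Complex.I) = 1 := by
            rw [← Complex.exp_add, neg_add_cancel, Complex.exp_zero]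
          have hq0 : (starRingEnd ℂ) (q k 0) * q k 0 = ((‖q k 0‖^2 : ℝ) : ℂ) := by
            rw [← Complex.normSq_eq_conj_mul_self]
            norm_cast
            simp [Complex.normSq_eq_norm_sq]
          push_cast at hq0 ⊢
          simp only [map_mul, Complex.conj_ofReal, hc]
          linear_combination ((m k : ℂ) * (R t : ℂ) * (((deriv R t : ℝ) : ℂ)
              + (R t : ℂ) * ((deriv θ t : ℝ) : ℂ) * Complex.I)
              * ((starRingEnd ℂ) (q k 0) * q k 0)) * he
            + ((m k : ℂ) * (R t : ℂ) * (((deriv R t : ℝ) : ℂ)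
              + (R t : ℂ) * ((deriv θ t : ℝ) : ℂ) * Complex.I)) * hq0
        calc (∑ k, (m k : ℂ) * ((starRingEnd ℂ) (q k t) * deriv (q k) t))
            = ∑ k, ((m k * ‖q k 0‖^2 : ℝ) : ℂ)
              * (((R t * deriv R t : ℝ) : ℂ) + ((R t ^ 2 * deriv θ t : ℝ) : ℂ) * Complex.I) :=
              Finset.sum_congr rfl fun k _ => this k
          _ = ((I 0 : ℝ) : ℂ)
              * (((R t * deriv R t : ℝ) : ℂ) + ((R t ^ 2 * deriv θ t : ℝ) : ℂ) * Complex.I) := by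
              rw [← Finset.sum_mul]
              congr 1
              norm_cast
              exact (hI 0).symm
          _ = _ := by push_cast; ring
      have hCt := hC t
      rw [hsum] at hCt
      simp only [Complex.add_im, Complex.ofReal_im, Complex.mul_im, Complex.ofReal_re,
        Complex.I_im, Complex.I_re, mul_zero, mul_one, zero_add, add_zero] at hCt
      have hRne : R t ≠ 0 := (hRpos t).ne'
      have hne : R t ^ 2 * I 0 ≠ 0 := mul_ne_zero (pow_ne_zero _ hRne) (hIpos 0).ne'
      rw [hIt t, ← div_eq_mul_inv, eq_div_iff hne]
      linear_combination hCt
    -- θ t = θ 0 + C * F t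
    have hθeq : ∀ t, θ t = θ 0 + C * F t := by
      intro t
      have hg : ∀ s, HasDerivAt (fun u => θ u - C * F u) 0 s := by
        intro s
        have h1 := ((hθcd.differentiable (by simp) s).hasDerivAt).sub ((hFd s).const_mul C)
        simp only [hθ' s, sub_self] at h1
        exact h1
      have hconst : (fun u => θ u - C * F u) t = (fun u => θ u - C * F u) 0 :=
        is_const_of_deriv_eq_zero (fun s => (hg s).differentiableAt)
          (fun s => (hg s).deriv) t 0
      simp only [hF0, mul_zero, sub_zero] at hconst
      linarith [hconst]
    have hsqRt : ∀ t, Real.sqrt (I t) = R t * Real.sqrt (I 0) := by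
      intro t
      rw [hIt t, Real.sqrt_mul (sq_nonneg _), Real.sqrt_sq (hRpos t).le]
    intro k t
    have hQc : Q k = fun _ =>
        Complex.exp ((θ 0 : ℂ) * Complex.I) * q k 0 / (Real.sqrt (I 0) : ℂ) := by
      funext s
      have hFs : (∫ u in (0:ℝ)..s, (I u)⁻¹) = F s := rfl
      have hRne : ((R s : ℝ) : ℂ) ≠ 0 := by exact_mod_cast (hRpos s).ne'
      have key : Complex.exp (-(C : ℂ) * Complex.I * ((F s : ℝ) : ℂ))
          * Complex.exp ((((θ 0 : ℝ) : ℂ) + (C : ℂ) * ((F s : ℝ) : ℂ)) * Complex.I)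
          = Complex.exp (((θ 0 : ℝ) : ℂ) * Complex.I) := by
        rw [← Complex.exp_add]
        congr 1
        ring
      rw [hQ k s, hFs, heq k s, hθeq s, hsqRt s]
      push_cast
      rw [div_eq_div_iff (mul_ne_zero hRne (hsqne 0)) (hsqne 0), ← key]
      ring
    rw [hQc]
    exact deriv_const _ _
  · intro h
    have hsqcd : ContDiff ℝ (⊤ : ℕ∞) fun t => Real.sqrt (I t) := by
      rw [contDiff_iff_contDiffAt]
      exact fun t => (Real.contDiffAt_sqrt (hIne t)).comp t hIcd.contDiffAt
    have hFdiff : Differentiable ℝ F := fun t => (hFd t).differentiableAt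
    set R : ℝ → ℝ := fun t => Real.sqrt (I t) / Real.sqrt (I 0) with hRdef
    set θ : ℝ → ℝ := fun t => C * F t with hθdef
    have hRcd : ContDiff ℝ (⊤ : ℕ∞) R := hsqcd.div_const _
    have hRpos : ∀ t, 0 < R t := fun t => div_pos (hsq t) (hsq 0)
    have hRne : ∀ t, ((R t : ℝ) : ℂ) ≠ 0 := fun t => by exact_mod_cast (hRpos t).ne'
    -- the homographic formula, pointwise
    have heq : ∀ k t, q k t = (R t : ℂ) * Complex.exp ((θ t : ℂ) * Complex.I) * q k 0 := by
      intro k t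
      have hQdiff : Differentiable ℝ (Q k) := by
        rw [hQf k]
        refine Differentiable.div ?_
          (Complex.ofRealCLM.differentiable.comp (hsqcd.differentiable (by simp)))
          (fun t => hsqne t)
        exact (((Complex.ofRealCLM.differentiable.comp hFdiff).const_mul
          (-(C : ℂ) * Complex.I)).cexp).mul ((hq k).differentiable (by simp))
      have hconst : Q k t = Q k 0 := is_const_of_deriv_eq_zero hQdiff (h k) t 0
      have hFt : (∫ u in (0:ℝ)..t, (I u)⁻¹) = F t := rfl
      have hF0' : (∫ u in (0:ℝ)..(0:ℝ), (I u)⁻¹) = F 0 := rfl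
      rw [hQ k t, hQ k 0, hFt, hF0', hF0] at hconst
      simp only [Complex.ofReal_zero, mul_zero, Complex.exp_zero, one_mul] at hconst
      have h2 := (div_eq_div_iff (hsqne t) (hsqne 0)).mp hconst
      have key : Complex.exp ((C : ℂ) * ((F t : ℝ) : ℂ) * Complex.I)
          * Complex.exp (-(C : ℂ) * Complex.I * ((F t : ℝ) : ℂ)) = 1 := by
        rw [← Complex.exp_add,
          show (C : ℂ) * ((F t : ℝ) : ℂ) * Complex.I
            + -(C : ℂ) * Complex.I * ((F t : ℝ) : ℂ) = 0 by ring, Complex.exp_zero]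
      show q k t = ((Real.sqrt (I t) / Real.sqrt (I 0) : ℝ) : ℂ)
        * Complex.exp (((C * F t : ℝ) : ℂ) * Complex.I) * q k 0
      push_cast
      rw [div_mul_eq_mul_div, div_mul_eq_mul_div, eq_div_iff (hsqne 0)]
      linear_combination Complex.exp ((C : ℂ) * ((F t : ℝ) : ℂ) * Complex.I) * h2
        - q k t * ((Real.sqrt (I 0) : ℝ) : ℂ) * key
    -- θ is analytic
    have hθdiff : Differentiable ℝ θ := fun t => ((hFd t).const_mul C).differentiableAt
    obtain ⟨j, hj⟩ : ∃ j, q j 0 ≠ 0 := by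
      by_contra hcon
      push_neg at hcon
      have hI0 : I 0 = 0 := by
        rw [hI 0]
        simp [hcon]
      exact (hIpos 0).ne' hI0
    set w : ℝ → ℂ := fun t => q j t * ((R t : ℂ) * q j 0)⁻¹ with hwdef
    have hw : ∀ t, w t = Complex.exp ((θ t : ℂ) * Complex.I) := by
      intro t
      show q j t * ((R t : ℂ) * q j 0)⁻¹ = _
      rw [← div_eq_mul_inv, heq j t, div_eq_iff (mul_ne_zero (hRne t) hj)]
      ring
    have hden : ContDiff ℝ (⊤ : ℕ∞) (fun t : ℝ => (R t : ℂ) * q j 0) :=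
      (Complex.ofRealCLM.contDiff.comp hRcd).mul contDiff_const
    have hwcd : ContDiff ℝ (⊤ : ℕ∞) w := (hq j).mul (hden.inv (fun t => mul_ne_zero (hRne t) hj))
    have hwne : ∀ t, w t ≠ 0 := fun t => by rw [hw t]; exact Complex.exp_ne_zero _
    have hθcd : ContDiff ℝ (⊤ : ℕ∞) θ := by
      rw [contDiff_iff_contDiffAt]
      intro t₀
      have hlog : ContDiffAt ℝ (⊤ : ℕ∞) (fun t => Complex.log (w t / w t₀)) t₀ := by
        have h1 : AnalyticAt ℂ Complex.log (w t₀ / w t₀) := by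
          rw [div_self (hwne t₀)]
          exact analyticAt_clog Complex.one_mem_slitPlane
        exact ((h1.restrictScalars).contDiffAt).comp t₀ (hwcd.div_const _).contDiffAt
      have hgcd : ContDiffAt ℝ (⊤ : ℕ∞) (fun t => θ t₀ + (Complex.log (w t / w t₀)).im) t₀ :=
        contDiffAt_const.add (Complex.imCLM.contDiff.contDiffAt.comp t₀ hlog)
      refine hgcd.congr_of_eventuallyEq ?_
      have hev : ∀ᶠ t in 𝓝 t₀, θ t ∈ Metric.ball (θ t₀) π :=
        (hθdiff.continuous.continuousAt) (Metric.ball_mem_nhds _ Real.pi_pos)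
      refine hev.mono fun t ht => ?_
      rw [Metric.mem_ball, Real.dist_eq, abs_lt] at ht
      have hwt : w t / w t₀ = Complex.exp (((θ t - θ t₀ : ℝ) : ℂ) * Complex.I) := by
        rw [hw t, hw t₀, ← Complex.exp_sub]
        congr 1
        push_cast
        ring
      have him : ((((θ t - θ t₀ : ℝ) : ℂ)) * Complex.I).im = θ t - θ t₀ := by simp
      show θ t = θ t₀ + (Complex.log (w t / w t₀)).im
      rw [hwt, Complex.log_exp (by rw [him]; linarith) (by rw [him]; linarith), him]
      ring
    exact ⟨R, θ, hRcd, hθcd, hRpos, heq⟩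
end
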